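/- Let (U₁,…,U_d) be distributed according to the probability measure on [0,1]^d with the extended FGM density c (parameters λ^(k)_M satisfying the admissibility constraint), and let M ⊆ {1,…,d} with |M| ≥ 2. Then Var(∏_{m ∈ M} φ₁(U_m)) = s^(1)_M − (λ^(1)_M)² where s^(1)_M = 1 + ∑_{j=2}^{|M|} ∑_{N ⊆ M, |N| = j} (2/√5)^{|N|} λ^(2)_N, and Var(∏_{m ∈ M} φ₂(U_m)) = s^(2)_M − (λ^(2)_M)² where s^(2)_M = 1 + ∑_{j=2}^{|M|} ∑_{N ⊆ M, |N| = j} (2√5/7)^{|N|} λ^(2)_N. -/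

import Mathlib

open MeasureTheory ProbabilityTheory Real Finset

/-- The shifted Legendre-type functions: `φ₁(x) = √3 (2x − 1)` and
`φ₂(x) = √5 (6x² − 6x + 1)`. -/
noncomputable def phiFGM (k : ℕ) (x : ℝ) : ℝ :=
  if k = 1 then Real.sqrt 3 * (2 * x - 1) else Real.sqrt 5 * (6 * x ^ 2 - 6 * x + 1)

/-- Antiderivatives: `Φ₁(x) = √3 (x² − x)` and `Φ₂(x) = √5 (2x³ − 3x² + x)`. -/
noncomputable def PhiFGM (k : ℕ) (x : ℝ) : ℝ :=
  if k = 1 then Real.sqrt 3 * (x ^ 2 - x) else Real.sqrt 5 * (2 * x ^ 3 - 3 * x ^ 2 + x)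

/-- The density of the extended `d`-variate FGM copula with parameters `lam k M`:
`c(u) = 1 + ∑_{k=1}^2 ∑_{M ⊆ {1,…,d}, |M| ≥ 2} λ^(k)_M ∏_{m ∈ M} φ_k(u_m)`. -/
noncomputable def fgmDensity (d : ℕ) (lam : ℕ → Finset (Fin d) → ℝ) (u : Fin d → ℝ) : ℝ :=
  1 + ∑ k ∈ Finset.Icc 1 2, ∑ M ∈ Finset.univ.powerset.filter (fun M : Finset (Fin d) => 2 ≤ M.card),
      lam k M * ∏ m ∈ M, phiFGM k (u m)

/-- The admissibility constraint
`∑_{j=2}^d [ (√3)^j ∑_{|M|=j} |λ^(1)_M| + (√5)^j ∑_{|M|=j} |λ^(2)_M| ] ≤ 1`. -/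
def fgmAdmissible (d : ℕ) (lam : ℕ → Finset (Fin d) → ℝ) : Prop :=
  ∑ M ∈ Finset.univ.powerset.filter (fun M : Finset (Fin d) => 2 ≤ M.card),
      (Real.sqrt 3 ^ M.card * |lam 1 M| + Real.sqrt 5 ^ M.card * |lam 2 M|) ≤ 1

/-- The probability measure on `[0,1]^d` with density `c`: the uniform measure on the
unit cube reweighted by the extended FGM copula density. -/
noncomputable def fgmMeasure (d : ℕ) (lam : ℕ → Finset (Fin d) → ℝ) :
    Measure (Fin d → ℝ) :=
  (Measure.pi fun _ : Fin d => volume.restrict (Set.Icc (0:ℝ) 1)).withDensity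
    fun u => ENNReal.ofReal (fgmDensity d lam u)

open scoped ENNReal

/-! Every moment needed is the integral against `c` of a product `∏_{m ∈ M} g(u_m)`.
Expanding `c`, it splits into integrals over the uniform cube of products of one-variable
functions, which factor. Since each `φ_k` has mean zero, the term of `λ^(k)_N` survives only
when `N ⊆ M`, contributing `λ^(k)_N (∫ φ_k g)^|N| (∫ g)^|M \ N|`. For `g = φ_j` (mean zero,
orthonormal to `φ_k`) only `λ^(j)_M` remains; for `g = φ_j²` (mean one, `∫ φ₁ φ_j² = 0`)
only the terms `λ^(2)_N (∫ φ₂ φ_j²)^|N|` remain. -/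

instance : IsProbabilityMeasure ((volume : Measure ℝ).restrict (Set.Icc (0 : ℝ) 1)) :=
  ⟨by simp⟩

noncomputable def unitCubeMeasure (ι : Type*) [Fintype ι] : Measure (ι → ℝ) :=
  Measure.pi fun _ : ι => volume.restrict (Set.Icc (0 : ℝ) 1)

namespace unitCubeMeasure

variable {ι : Type*} [Fintype ι]

instance : IsProbabilityMeasure (unitCubeMeasure ι) := by
  unfold unitCubeMeasure; infer_instance

theorem eq_restrict_Icc : unitCubeMeasure ι = volume.restrict (Set.Icc 0 1) := by
  rw [unitCubeMeasure, volume_pi, ← Set.pi_univ_Icc, Measure.restrict_pi_pi]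
  rfl

theorem ae_mem_Icc : ∀ᵐ u ∂unitCubeMeasure ι, u ∈ Set.Icc 0 1 := by
  rw [eq_restrict_Icc]
  exact ae_restrict_mem measurableSet_Icc

theorem memLp_of_continuous {ν : Measure (ι → ℝ)} [IsFiniteMeasure ν]
    (hν : ν ≪ unitCubeMeasure ι) {f : (ι → ℝ) → ℝ} (hf : Continuous f)
    (p : ℝ≥0∞) :
    MemLp f p ν := by
  obtain ⟨C, hC⟩ := isCompact_Icc.exists_bound_of_continuousOn hf.continuousOn
  refine MemLp.of_bound hf.aestronglyMeasurable C ?_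
  filter_upwards [hν.ae_le ae_mem_Icc] with u hu using hC u hu

theorem integrable_of_continuous {f : (ι → ℝ) → ℝ} (hf : Continuous f) :
    Integrable f (unitCubeMeasure ι) :=
  memLp_one_iff_integrable.mp (memLp_of_continuous Measure.AbsolutelyContinuous.rfl hf 1)

theorem integral_finset_prod [DecidableEq ι] (s : Finset ι) (f : ι → ℝ → ℝ) :
    ∫ u, ∏ i ∈ s, f i (u i) ∂unitCubeMeasure ι =
      ∏ i ∈ s, ∫ x in Set.Icc (0 : ℝ) 1, f i x := by
  calc ∫ u, ∏ i ∈ s, f i (u i) ∂unitCubeMeasure ι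
      = ∫ u, ∏ i, (if i ∈ s then f i (u i) else 1) ∂unitCubeMeasure ι := by
        simp only [Finset.prod_ite_mem, Finset.univ_inter]
    _ = ∏ i, ∫ x in Set.Icc (0 : ℝ) 1, (if i ∈ s then f i x else 1) :=
        integral_fintype_prod_eq_prod (fun i x => if i ∈ s then f i x else 1)
    _ = ∏ i, (if i ∈ s then ∫ x in Set.Icc (0 : ℝ) 1, f i x else 1) :=
        Finset.prod_congr rfl fun i _ => by split_ifs <;> simp
    _ = ∏ i ∈ s, ∫ x in Set.Icc (0 : ℝ) 1, f i x := by
        rw [Finset.prod_ite_mem, Finset.univ_inter]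

theorem integral_prod_mul_prod [DecidableEq ι] {φ g : ℝ → ℝ}
    (hφ : ∫ x in Set.Icc (0 : ℝ) 1, φ x = 0) (N M : Finset ι) :
    ∫ u, (∏ i ∈ N, φ (u i)) * ∏ i ∈ M, g (u i) ∂unitCubeMeasure ι =
      if N ⊆ M then
        (∫ x in Set.Icc (0 : ℝ) 1, φ x * g x) ^ N.card *
          (∫ x in Set.Icc (0 : ℝ) 1, g x) ^ (M \ N).card
      else 0 := by
  have hsplit : ∀ u : ι → ℝ, (∏ i ∈ N, φ (u i)) * ∏ i ∈ M, g (u i) =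
      ∏ i ∈ N ∪ M, (if i ∈ N then φ (u i) else 1) * (if i ∈ M then g (u i) else 1) := by
    intro u
    rw [Finset.prod_mul_distrib, Finset.prod_ite_mem, Finset.prod_ite_mem,
      Finset.union_inter_cancel_left, Finset.union_inter_cancel_right]
  simp_rw [hsplit]
  rw [integral_finset_prod
    (f := fun i x => (if i ∈ N then φ x else 1) * (if i ∈ M then g x else 1))]
  split_ifs with hNM
  · have hfactor : ∀ i ∈ M, ∫ x in Set.Icc (0 : ℝ) 1,
        (if i ∈ N then φ x else 1) * (if i ∈ M then g x else 1) =
          if i ∈ N then ∫ x in Set.Icc (0 : ℝ) 1, φ x * g x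
          else ∫ x in Set.Icc (0 : ℝ) 1, g x :=
      fun i hi => by split_ifs <;> simp
    rw [Finset.union_eq_right.mpr hNM, Finset.prod_congr rfl hfactor, Finset.prod_ite,
      Finset.prod_const, Finset.prod_const, Finset.filter_mem_eq_inter,
      Finset.inter_eq_right.mpr hNM, Finset.filter_notMem_eq_sdiff]
  · obtain ⟨i, hiN, hiM⟩ := Finset.not_subset.mp hNM
    exact Finset.prod_eq_zero (Finset.mem_union_left M hiN) (by simpa [hiN, hiM] using hφ)

end unitCubeMeasure

theorem integral_Icc_zero_one_eq_of_poly {f : ℝ → ℝ} {n : ℕ} (c : Fin n → ℝ)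
    (hf : ∀ x, f x = ∑ i, c i * x ^ (i : ℕ)) :
    ∫ x in Set.Icc (0 : ℝ) 1, f x = ∑ i, c i / (i + 1) := by
  simp_rw [hf]
  rw [integral_Icc_eq_integral_Ioc, ← intervalIntegral.integral_of_le zero_le_one,
    intervalIntegral.integral_finsetSum fun i _ =>
      (by fun_prop : Continuous fun x : ℝ => c i * x ^ (i : ℕ)).intervalIntegrable _ _]
  simp [div_eq_mul_inv]

theorem phiFGM_one (x : ℝ) : phiFGM 1 x = √3 * (2 * x - 1) := rfl

theorem phiFGM_two (x : ℝ) : phiFGM 2 x = √5 * (6 * x ^ 2 - 6 * x + 1) := rfl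

@[fun_prop]
theorem continuous_phiFGM (k : ℕ) : Continuous (phiFGM k) := by
  unfold phiFGM
  split_ifs <;> fun_prop

theorem eq_one_or_eq_two_of_mem_Icc {k : ℕ} (hk : k ∈ Finset.Icc 1 2) : k = 1 ∨ k = 2 := by
  simp only [Finset.mem_Icc] at hk
  omega

theorem integral_phiFGM {k : ℕ} (hk : k ∈ Finset.Icc 1 2) :
    ∫ x in Set.Icc (0 : ℝ) 1, phiFGM k x = 0 := by
  rcases eq_one_or_eq_two_of_mem_Icc hk with rfl | rfl
  · rw [integral_Icc_zero_one_eq_of_poly ![-√3, 2 * √3] fun x => by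
      simp [phiFGM_one, Fin.sum_univ_succ]; ring]
    simp [Fin.sum_univ_succ]; ring
  · rw [integral_Icc_zero_one_eq_of_poly ![√5, -6 * √5, 6 * √5] fun x => by
      simp [phiFGM_two, Fin.sum_univ_succ]; ring]
    simp [Fin.sum_univ_succ]; ring

theorem integral_phiFGM_one_mul_phiFGM_two :
    ∫ x in Set.Icc (0 : ℝ) 1, phiFGM 1 x * phiFGM 2 x = 0 := by
  rw [integral_Icc_zero_one_eq_of_poly
    ![-(√3 * √5), 8 * (√3 * √5), -18 * (√3 * √5), 12 * (√3 * √5)] fun x => by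
      simp [phiFGM_one, phiFGM_two, Fin.sum_univ_succ]; ring]
  simp [Fin.sum_univ_succ]; ring

theorem integral_phiFGM_mul_phiFGM {j k : ℕ} (hj : j ∈ Finset.Icc 1 2)
    (hk : k ∈ Finset.Icc 1 2) :
    ∫ x in Set.Icc (0 : ℝ) 1, phiFGM j x * phiFGM k x = if j = k then 1 else 0 := by
  rcases eq_one_or_eq_two_of_mem_Icc hj with rfl | rfl <;>
    rcases eq_one_or_eq_two_of_mem_Icc hk with rfl | rfl
  · rw [integral_Icc_zero_one_eq_of_poly ![3, -12, 12] fun x => by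
      simp [← sq, phiFGM_one, mul_pow, Fin.sum_univ_succ]; ring]
    simp [Fin.sum_univ_succ]; norm_num
  · simpa using integral_phiFGM_one_mul_phiFGM_two
  · simpa [mul_comm] using integral_phiFGM_one_mul_phiFGM_two
  · rw [integral_Icc_zero_one_eq_of_poly ![5, -60, 240, -360, 180] fun x => by
      simp [← sq, phiFGM_two, mul_pow, Fin.sum_univ_succ]; ring]
    simp [Fin.sum_univ_succ]; norm_num

theorem integral_phiFGM_one_mul_phiFGM_sq {k : ℕ} (hk : k ∈ Finset.Icc 1 2) :
    ∫ x in Set.Icc (0 : ℝ) 1, phiFGM 1 x * phiFGM k x ^ 2 = 0 := by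
  rcases eq_one_or_eq_two_of_mem_Icc hk with rfl | rfl
  · rw [integral_Icc_zero_one_eq_of_poly
      ![-3 * √3, 18 * √3, -36 * √3, 24 * √3] fun x => by
        simp [phiFGM_one, mul_pow, Fin.sum_univ_succ]; ring]
    simp [Fin.sum_univ_succ]; ring
  · rw [integral_Icc_zero_one_eq_of_poly
      ![-5 * √3, 70 * √3, -360 * √3, 840 * √3, -900 * √3, 360 * √3] fun x => by
        simp [phiFGM_one, phiFGM_two, mul_pow, Fin.sum_univ_succ]; ring]
    simp [Fin.sum_univ_succ]; ring

theorem integral_phiFGM_two_mul_phiFGM_one_sq :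
    ∫ x in Set.Icc (0 : ℝ) 1, phiFGM 2 x * phiFGM 1 x ^ 2 = 2 / √5 := by
  rw [integral_Icc_zero_one_eq_of_poly
    ![3 * √5, -30 * √5, 102 * √5, -144 * √5, 72 * √5] fun x => by
      simp [phiFGM_one, phiFGM_two, mul_pow, Fin.sum_univ_succ]; ring]
  simp [Fin.sum_univ_succ]
  field_simp
  norm_num

theorem integral_phiFGM_two_mul_phiFGM_two_sq :
    ∫ x in Set.Icc (0 : ℝ) 1, phiFGM 2 x * phiFGM 2 x ^ 2 = 2 * √5 / 7 := by
  rw [integral_Icc_zero_one_eq_of_poly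
    ![5 * √5, -90 * √5, 630 * √5, -2160 * √5, 3780 * √5, -3240 * √5, 1080 * √5]
    fun x => by
      simp [phiFGM_two, mul_pow, Fin.sum_univ_succ]; ring]
  simp [Fin.sum_univ_succ]
  ring

theorem abs_phiFGM_one_le {x : ℝ} (hx : x ∈ Set.Icc (0 : ℝ) 1) : |phiFGM 1 x| ≤ √3 := by
  rw [phiFGM_one, abs_mul, abs_of_nonneg (Real.sqrt_nonneg 3)]
  exact mul_le_of_le_one_right (Real.sqrt_nonneg 3)
    (abs_le.mpr ⟨by linarith [hx.1], by linarith [hx.2]⟩)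

theorem abs_phiFGM_two_le {x : ℝ} (hx : x ∈ Set.Icc (0 : ℝ) 1) : |phiFGM 2 x| ≤ √5 := by
  rw [phiFGM_two, abs_mul, abs_of_nonneg (Real.sqrt_nonneg 5)]
  refine mul_le_of_le_one_right (Real.sqrt_nonneg 5) (abs_le.mpr ⟨?_, ?_⟩)
  · nlinarith [sq_nonneg (2 * x - 1)]
  · nlinarith [mul_nonneg hx.1 (sub_nonneg.mpr hx.2)]

section

variable {d : ℕ} {lam : ℕ → Finset (Fin d) → ℝ}

theorem continuous_fgmDensity : Continuous (fgmDensity d lam) := by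
  unfold fgmDensity
  fun_prop

theorem fgmDensity_nonneg (hlam : fgmAdmissible d lam) {u : Fin d → ℝ}
    (hu : u ∈ Set.Icc 0 1) : 0 ≤ fgmDensity d lam u := by
  have hbound : ∀ (k : ℕ) (B : ℝ), (∀ x ∈ Set.Icc (0 : ℝ) 1, |phiFGM k x| ≤ B) →
      ∀ N : Finset (Fin d), |∏ m ∈ N, phiFGM k (u m)| ≤ B ^ N.card := fun k B hB N => by
    rw [Finset.abs_prod]
    exact (Finset.prod_le_prod (fun _ _ => abs_nonneg _) fun m _ =>
      hB _ ⟨hu.1 m, hu.2 m⟩).trans_eq (Finset.prod_const B)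
  have hsum : |∑ k ∈ Finset.Icc 1 2,
      ∑ N ∈ Finset.univ.powerset.filter (fun N : Finset (Fin d) => 2 ≤ N.card),
        lam k N * ∏ m ∈ N, phiFGM k (u m)| ≤ 1 := by
    rw [Finset.sum_comm]
    refine (Finset.abs_sum_le_sum_abs _ _).trans ((Finset.sum_le_sum fun N _ => ?_).trans hlam)
    rw [show Finset.Icc 1 2 = {1, 2} from rfl, Finset.sum_pair (by norm_num : (1 : ℕ) ≠ 2)]
    calc |lam 1 N * ∏ m ∈ N, phiFGM 1 (u m) + lam 2 N * ∏ m ∈ N, phiFGM 2 (u m)|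
        ≤ |lam 1 N| * |∏ m ∈ N, phiFGM 1 (u m)| +
            |lam 2 N| * |∏ m ∈ N, phiFGM 2 (u m)| := by
          rw [← abs_mul, ← abs_mul]; exact abs_add_le _ _
      _ ≤ |lam 1 N| * √3 ^ N.card + |lam 2 N| * √5 ^ N.card := by
          gcongr
          · exact hbound 1 _ (fun x hx => abs_phiFGM_one_le hx) N
          · exact hbound 2 _ (fun x hx => abs_phiFGM_two_le hx) N
      _ = √3 ^ N.card * |lam 1 N| + √5 ^ N.card * |lam 2 N| := by ring
  rw [fgmDensity]
  linarith [(abs_le.mp hsum).1]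

end

namespace fgmMeasure

variable {d : ℕ} {lam : ℕ → Finset (Fin d) → ℝ}

theorem absolutelyContinuous : fgmMeasure d lam ≪ unitCubeMeasure (Fin d) :=
  withDensity_absolutelyContinuous _ _

theorem integral_eq (hlam : fgmAdmissible d lam) (f : (Fin d → ℝ) → ℝ) :
    ∫ u, f u ∂fgmMeasure d lam =
      ∫ u, fgmDensity d lam u * f u ∂unitCubeMeasure (Fin d) := by
  rw [fgmMeasure, integral_withDensity_eq_integral_toReal_smul
    continuous_fgmDensity.measurable.ennreal_ofReal
    (ae_of_all _ fun _ => ENNReal.ofReal_lt_top)]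
  refine integral_congr_ae ?_
  filter_upwards [unitCubeMeasure.ae_mem_Icc] with u hu
  rw [ENNReal.toReal_ofReal (fgmDensity_nonneg hlam hu), smul_eq_mul]

theorem integral_prod (hlam : fgmAdmissible d lam) (M : Finset (Fin d)) {g : ℝ → ℝ}
    (hg : Continuous g) :
    ∫ u, ∏ m ∈ M, g (u m) ∂fgmMeasure d lam =
      (∫ x in Set.Icc (0 : ℝ) 1, g x) ^ M.card +
        ∑ k ∈ Finset.Icc 1 2, ∑ N ∈ M.powerset.filter (fun N => 2 ≤ N.card),
          lam k N * ((∫ x in Set.Icc (0 : ℝ) 1, phiFGM k x * g x) ^ N.card *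
            (∫ x in Set.Icc (0 : ℝ) 1, g x) ^ (M \ N).card) := by
  set A := Finset.univ.powerset.filter (fun N : Finset (Fin d) => 2 ≤ N.card)
  have hint : ∀ k N, Integrable (fun u => lam k N * ((∏ m ∈ N, phiFGM k (u m)) *
      ∏ m ∈ M, g (u m))) (unitCubeMeasure (Fin d)) := fun k N =>
    unitCubeMeasure.integrable_of_continuous (by fun_prop)
  have hexpand : ∀ u, fgmDensity d lam u * ∏ m ∈ M, g (u m) = ∏ m ∈ M, g (u m) +
      ∑ k ∈ Finset.Icc 1 2, ∑ N ∈ A, lam k N * ((∏ m ∈ N, phiFGM k (u m)) *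
        ∏ m ∈ M, g (u m)) := by
    intro u
    simp only [fgmDensity, add_mul, one_mul, Finset.sum_mul, mul_assoc, A]
  have hfilter : A.filter (· ⊆ M) = M.powerset.filter (fun N => 2 ≤ N.card) := by
    ext N
    simp [A, and_comm]
  rw [integral_eq hlam]
  simp_rw [hexpand]
  rw [integral_add (unitCubeMeasure.integrable_of_continuous (by fun_prop))
      (integrable_finsetSum _ fun k _ => integrable_finsetSum _ fun N _ => hint k N),
    integral_finsetSum _ fun k _ => integrable_finsetSum _ fun N _ => hint k N,
    unitCubeMeasure.integral_finset_prod, Finset.prod_const]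
  congr 1
  refine Finset.sum_congr rfl fun k hk => ?_
  rw [integral_finsetSum _ fun N _ => hint k N]
  simp_rw [integral_const_mul, unitCubeMeasure.integral_prod_mul_prod (integral_phiFGM hk),
    mul_ite, mul_zero]
  rw [← Finset.sum_filter, hfilter]

theorem isProbabilityMeasure (hlam : fgmAdmissible d lam) :
    IsProbabilityMeasure (fgmMeasure d lam) := by
  have h := integral_prod hlam ∅ continuous_const (g := fun _ => 1)
  exact ⟨(ENNReal.toReal_eq_one_iff _).mp
    (by simpa [Finset.filter_singleton, Measure.real] using h)⟩

theorem integral_prod_phiFGM (hlam : fgmAdmissible d lam) {k : ℕ} (hk : k ∈ Finset.Icc 1 2)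
    {M : Finset (Fin d)} (hM : 2 ≤ M.card) :
    ∫ u, ∏ m ∈ M, phiFGM k (u m) ∂fgmMeasure d lam = lam k M := by
  have hMmem : M ∈ M.powerset.filter (fun N => 2 ≤ N.card) :=
    Finset.mem_filter.mpr ⟨Finset.mem_powerset_self M, hM⟩
  rw [integral_prod hlam M (continuous_phiFGM k), integral_phiFGM hk, zero_pow (by omega),
    zero_add, Finset.sum_comm, Finset.sum_eq_single_of_mem M hMmem]
  · rw [Finset.sum_eq_single_of_mem k hk]
    · simp [integral_phiFGM_mul_phiFGM hk hk]
    · intro j hj hjk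
      simp [integral_phiFGM_mul_phiFGM hj hk, hjk, zero_pow (by omega : M.card ≠ 0)]
  · intro N hN hNM
    have hNsub : N ⊆ M := Finset.mem_powerset.mp (Finset.mem_filter.mp hN).1
    have hcard : (M \ N).card ≠ 0 := (Finset.card_pos.mpr (Finset.sdiff_nonempty.mpr
      fun h => hNM (subset_antisymm hNsub h))).ne'
    simp [zero_pow hcard]

theorem integral_sq_prod_phiFGM (hlam : fgmAdmissible d lam) {k : ℕ}
    (hk : k ∈ Finset.Icc 1 2) (M : Finset (Fin d)) :
    ∫ u, (∏ m ∈ M, phiFGM k (u m)) ^ 2 ∂fgmMeasure d lam =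
      1 + ∑ N ∈ M.powerset.filter (fun N => 2 ≤ N.card),
        (∫ x in Set.Icc (0 : ℝ) 1, phiFGM 2 x * phiFGM k x ^ 2) ^ N.card * lam 2 N := by
  have hsq : ∫ x in Set.Icc (0 : ℝ) 1, phiFGM k x ^ 2 = 1 := by
    simpa [sq] using integral_phiFGM_mul_phiFGM hk hk
  simp_rw [← Finset.prod_pow]
  rw [integral_prod hlam M (g := fun x => phiFGM k x ^ 2) (by fun_prop), hsq, one_pow,
    show Finset.Icc 1 2 = {1, 2} from rfl, Finset.sum_pair (by norm_num : (1 : ℕ) ≠ 2),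
    integral_phiFGM_one_mul_phiFGM_sq hk]
  simp only [one_pow, mul_one]
  rw [Finset.sum_eq_zero fun N hN => ?_, zero_add]
  · simp_rw [mul_comm (lam 2 _)]
  · rw [zero_pow (by have := (Finset.mem_filter.mp hN).2; omega), mul_zero]

theorem variance_prod_phiFGM (hlam : fgmAdmissible d lam) {k : ℕ} (hk : k ∈ Finset.Icc 1 2)
    {M : Finset (Fin d)} (hM : 2 ≤ M.card) :
    variance (fun u => ∏ m ∈ M, phiFGM k (u m)) (fgmMeasure d lam) =
      1 + ∑ N ∈ M.powerset.filter (fun N => 2 ≤ N.card),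
        (∫ x in Set.Icc (0 : ℝ) 1, phiFGM 2 x * phiFGM k x ^ 2) ^ N.card * lam 2 N -
          lam k M ^ 2 := by
  have := isProbabilityMeasure hlam
  rw [variance_eq_sub (unitCubeMeasure.memLp_of_continuous absolutelyContinuous
    (by fun_prop) 2)]
  simp only [Pi.pow_apply]
  rw [integral_sq_prod_phiFGM hlam hk, integral_prod_phiFGM hlam hk hM]

end fgmMeasure

theorem stmt_10_general (d : ℕ) (lam : ℕ → Finset (Fin d) → ℝ)
    (hlam : fgmAdmissible d lam) (M : Finset (Fin d)) (hM : 2 ≤ M.card) :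
    ProbabilityTheory.variance (fun u => ∏ m ∈ M, phiFGM 1 (u m)) (fgmMeasure d lam) =
      (1 + ∑ N ∈ M.powerset.filter (fun N : Finset (Fin d) => 2 ≤ N.card),
          (2 / Real.sqrt 5) ^ N.card * lam 2 N) - (lam 1 M) ^ 2 ∧
    ProbabilityTheory.variance (fun u => ∏ m ∈ M, phiFGM 2 (u m)) (fgmMeasure d lam) =
      (1 + ∑ N ∈ M.powerset.filter (fun N : Finset (Fin d) => 2 ≤ N.card),
          (2 * Real.sqrt 5 / 7) ^ N.card * lam 2 N) - (lam 2 M) ^ 2 := by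
  constructor
  · rw [fgmMeasure.variance_prod_phiFGM hlam (by decide) hM,
      integral_phiFGM_two_mul_phiFGM_one_sq]
  · rw [fgmMeasure.variance_prod_phiFGM hlam (by decide) hM,
      integral_phiFGM_two_mul_phiFGM_two_sq]

theorem stmt_10 (d : ℕ) (hd : 2 ≤ d) (lam : ℕ → Finset (Fin d) → ℝ)
    (hlam : fgmAdmissible d lam) (M : Finset (Fin d)) (hM : 2 ≤ M.card) :
    ProbabilityTheory.variance (fun u => ∏ m ∈ M, phiFGM 1 (u m)) (fgmMeasure d lam) =
      (1 + ∑ N ∈ M.powerset.filter (fun N : Finset (Fin d) => 2 ≤ N.card),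
          (2 / Real.sqrt 5) ^ N.card * lam 2 N) - (lam 1 M) ^ 2 ∧
    ProbabilityTheory.variance (fun u => ∏ m ∈ M, phiFGM 2 (u m)) (fgmMeasure d lam) =
      (1 + ∑ N ∈ M.powerset.filter (fun N : Finset (Fin d) => 2 ≤ N.card),
          (2 * Real.sqrt 5 / 7) ^ N.card * lam 2 N) - (lam 2 M) ^ 2 :=
  stmt_10_general d lam hlam M hM
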